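/- arXiv:2503.03950 — 3 statements merged into one kernel-verified Lean document; each statement's English description precedes it below -/
import Mathlib

section
/- Let (S, A, n, u) be an organizer: S a system with nonzero subsystem A, n a full internal entity vector with A₀ n = A₁ n, and u a full internal transformation vector with A₀ᵀ u = A₁ᵀ u. Define the system graph of A as the directed bipartite graph on internal entities and internal transformations, with an edge from entity j to transformation i whenever A₀[i,j] > 0 and an edge from transformation i to entity j whenever A₁[i,j] > 0. Then this graph contains a directed cycle (a catalytic cycle). -/
open Finset

/-- The system graph of a subsystem `(A0, A1)`: a directed bipartite graph on
entities (`Sum.inl`) and transformations (`Sum.inr`), with an edge `j → i` when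
`A0 i j > 0` (entity `j` is an input of transformation `i`) and an edge `i → j`
when `A1 i j > 0` (entity `j` is an output of transformation `i`). -/
def sysStep {T E : Type*} (A0 A1 : T → E → ℕ) : (E ⊕ T) → (E ⊕ T) → Prop
  | Sum.inl j, Sum.inr i => 0 < A0 i j
  | Sum.inr i, Sum.inl j => 0 < A1 i j
  | _, _ => False

/-- Each organizer contains at least one catalytic cycle, i.e. the
system graph of its subsystem has a directed cycle. -/
theorem stmt_2 {T E : Type*} [Fintype T] [Fintype E]
    (S0 S1 A0 A1 : T → E → ℕ)
    (hA0 : ∀ i j, A0 i j ≤ S0 i j) (hA1 : ∀ i j, A1 i j ≤ S1 i j)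
    (hAne : ∃ i j, 0 < A0 i j ∨ 0 < A1 i j)
    (n : E → ℕ) (u : T → ℕ)
    (hnfull : ∀ j : E, (∃ i, 0 < A0 i j ∨ 0 < A1 i j) ↔ 0 < n j)
    (hufull : ∀ i : T, (∃ j, 0 < A0 i j ∨ 0 < A1 i j) ↔ 0 < u i)
    (hcons : ∀ i : T, ∑ j, A0 i j * n j = ∑ j, A1 i j * n j)
    (hcyc : ∀ j : E, ∑ i, A0 i j * u i = ∑ i, A1 i j * u i) :
    ∃ v : E ⊕ T, Relation.TransGen (sysStep A0 A1) v v := by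
  classical
  set intl : E ⊕ T → Prop := fun v => match v with
    | Sum.inl j => 0 < n j
    | Sum.inr i => 0 < u i with hintl
  -- every internal vertex has an internal successor
  have key : ∀ v : E ⊕ T, intl v → ∃ w, sysStep A0 A1 v w ∧ intl w := by
    rintro (j | i) hv
    · -- entity j : find i' with A0 i' j > 0
      have hj : 0 < n j := hv
      have hex : ∃ i, 0 < A0 i j := by
        obtain ⟨i, hi⟩ := (hnfull j).mpr hj
        rcases hi with h | h
        · exact ⟨i, h⟩
        · have hui : 0 < u i := (hufull i).mp ⟨j, Or.inr h⟩
          have hpos : 0 < ∑ i', A1 i' j * u i' :=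
            lt_of_lt_of_le (Nat.mul_pos h hui)
              (Finset.single_le_sum (f := fun i' => A1 i' j * u i') (fun _ _ => Nat.zero_le _) (mem_univ i))
          rw [← hcyc j] at hpos
          by_contra hc
          push_neg at hc
          simp only [Nat.le_zero] at hc
          simp [hc] at hpos
      obtain ⟨i', hi'⟩ := hex
      exact ⟨Sum.inr i', hi', (hufull i').mp ⟨j, Or.inl hi'⟩⟩
    · -- transformation i : find j' with A1 i j' > 0
      have hi : 0 < u i := hv
      have hex : ∃ j, 0 < A1 i j := by
        obtain ⟨j, hj⟩ := (hufull i).mpr hi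
        rcases hj with h | h
        · have hnj : 0 < n j := (hnfull j).mp ⟨i, Or.inl h⟩
          have hpos : 0 < ∑ j', A0 i j' * n j' :=
            lt_of_lt_of_le (Nat.mul_pos h hnj)
              (Finset.single_le_sum (f := fun j' => A0 i j' * n j') (fun _ _ => Nat.zero_le _) (mem_univ j))
          rw [hcons i] at hpos
          by_contra hc
          push_neg at hc
          simp only [Nat.le_zero] at hc
          simp [hc] at hpos
        · exact ⟨j, h⟩
      obtain ⟨j', hj'⟩ := hex
      exact ⟨Sum.inl j', hj', (hnfull j').mp ⟨i, Or.inr hj'⟩⟩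
  -- a starting internal vertex
  obtain ⟨i0, j0, h0⟩ := hAne
  have hv0 : intl (Sum.inl j0) := (hnfull j0).mp ⟨i0, h0⟩
  -- successor function on internal vertices
  let α := {v : E ⊕ T // intl v}
  have : Finite α := Subtype.finite
  let f : α → α := fun v => ⟨(key v.1 v.2).choose, (key v.1 v.2).choose_spec.2⟩
  have hstep : ∀ v : α, sysStep A0 A1 v.1 (f v).1 := fun v => (key v.1 v.2).choose_spec.1
  have hiter : ∀ (k : ℕ) (v : α), Relation.TransGen (sysStep A0 A1) v.1 ((f^[k+1]) v).1 := by
    intro k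
    induction k with
    | zero => intro v; simpa using Relation.TransGen.single (hstep v)
    | succ m ih =>
        intro v
        rw [Function.iterate_succ_apply']
        exact (ih v).tail (hstep _)
  -- pigeonhole
  obtain ⟨a, b, hab, heq⟩ :=
    Finite.exists_ne_map_eq_of_infinite (fun k : ℕ => (f^[k]) ⟨Sum.inl j0, hv0⟩)
  wlog hlt : a < b generalizing a b
  · exact this b a hab.symm heq.symm (by omega)
  obtain ⟨m, hm⟩ : ∃ m, b = a + (m + 1) := ⟨b - a - 1, by omega⟩
  refine ⟨((f^[b]) ⟨Sum.inl j0, hv0⟩).1, ?_⟩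
  have h1 := hiter m ((f^[a]) ⟨Sum.inl j0, hv0⟩)
  rw [← Function.iterate_add_apply, Nat.add_comm, ← hm, heq] at h1
  exact h1
end

section
/- Let (S, A, n, u) be an organizer (A₀ n = A₁ n with n a full internal entity vector; A₀ᵀ u = A₁ᵀ u with u a full internal transformation vector). Then every internal entity lies on some directed cycle of the system graph of A, i.e., every internal entity is a catalyst. -/
/-!
Weight the edges of the system graph by `A0 i j * n j * u i` (for `j → i`) and
`A1 i j * n j * u i` (for `i → j`). The two organizer equations say exactly that this
is a circulation: flow is conserved at transformations by `A0 n = A1 n` and at entities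
by `A0ᵀ u = A1ᵀ u`. In a circulation the set `R` of vertices reachable from `v` has no
outflow, hence no inflow; so an edge leaving `v` with positive weight forces `v ∈ R`
(for an incoming edge, reverse the circulation).
Since `n` and `u` are full, every edge at an internal entity has positive weight.
-/

open Finset

def IsCirculation {V : Type*} [Fintype V] (c : V → V → ℕ) : Prop :=
  ∀ v, ∑ w, c v w = ∑ w, c w v

namespace IsCirculation

variable {V : Type*} [Fintype V] {c : V → V → ℕ}

theorem transpose (hc : IsCirculation c) : IsCirculation fun v w => c w v :=
  fun v => (hc v).symm

theorem sum_compl_out_eq_sum_compl_in [DecidableEq V] (hc : IsCirculation c) (R : Finset V) :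
    ∑ x ∈ R, ∑ y ∈ Rᶜ, c x y = ∑ x ∈ R, ∑ y ∈ Rᶜ, c y x := by
  have split : ∀ f : V → V → ℕ,
      ∑ x ∈ R, ∑ y, f x y = ∑ x ∈ R, ∑ y ∈ R, f x y + ∑ x ∈ R, ∑ y ∈ Rᶜ, f x y := by
    intro f
    rw [← sum_add_distrib]
    exact sum_congr rfl fun x _ => (sum_add_sum_compl R _).symm
  have balance : ∑ x ∈ R, ∑ y, c x y = ∑ x ∈ R, ∑ y, c y x :=
    sum_congr rfl fun x _ => hc x
  rw [split c, split fun x y => c y x, sum_comm (s := R) (t := R) (f := fun x y => c y x)]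
    at balance
  exact Nat.add_left_cancel balance

theorem transGen_self_of_pos_left (hc : IsCirculation c) {v w : V} (hvw : 0 < c v w) :
    Relation.TransGen (fun a b => 0 < c a b) v v := by
  classical
  set R := univ.filter (Relation.TransGen (fun a b => 0 < c a b) v)
  have hwR : w ∈ R := mem_filter.2 ⟨mem_univ _, .single hvw⟩
  have hclosed : ∀ x ∈ R, ∀ y, 0 < c x y → y ∈ R := by
    intro x hx y hxy
    simp only [R, mem_filter, mem_univ, true_and] at hx ⊢
    exact hx.tail hxy
  have hin : ∑ x ∈ R, ∑ y ∈ Rᶜ, c y x = 0 := by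
    rw [← hc.sum_compl_out_eq_sum_compl_in R]
    exact sum_eq_zero fun x hx => sum_eq_zero fun y hy =>
      Nat.eq_zero_of_not_pos fun hxy => mem_compl.1 hy (hclosed x hx y hxy)
  by_contra hv
  have hvR : v ∈ Rᶜ := by simpa [R] using hv
  have : c v w ≤ ∑ x ∈ R, ∑ y ∈ Rᶜ, c y x :=
    calc c v w ≤ ∑ y ∈ Rᶜ, c y w :=
          single_le_sum (f := fun y => c y w) (fun _ _ => Nat.zero_le _) hvR
      _ ≤ ∑ x ∈ R, ∑ y ∈ Rᶜ, c y x :=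
          single_le_sum (f := fun x => ∑ y ∈ Rᶜ, c y x) (fun _ _ => Nat.zero_le _) hwR
  omega

theorem transGen_self_of_pos_right (hc : IsCirculation c) {v w : V} (hwv : 0 < c w v) :
    Relation.TransGen (fun a b => 0 < c a b) v v :=
  Relation.transGen_swap.1 (hc.transpose.transGen_self_of_pos_left hwv)

end IsCirculation

section Organizer

variable {T E : Type*} (A0 A1 : T → E → ℕ) (n : E → ℕ) (u : T → ℕ)

def sysFlow : (E ⊕ T) → (E ⊕ T) → ℕ
  | Sum.inl j, Sum.inr i => A0 i j * n j * u i
  | Sum.inr i, Sum.inl j => A1 i j * n j * u i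
  | _, _ => 0

variable {A0 A1 n u}

theorem isCirculation_sysFlow [Fintype T] [Fintype E]
    (hcons : ∀ i, ∑ j, A0 i j * n j = ∑ j, A1 i j * n j)
    (hcyc : ∀ j, ∑ i, A0 i j * u i = ∑ i, A1 i j * u i) :
    IsCirculation (sysFlow A0 A1 n u) := by
  rintro (j | i)
  · simp only [Fintype.sum_sum_type, sysFlow, sum_const_zero, zero_add]
    simp_rw [mul_right_comm _ (n j), ← sum_mul, hcyc]
  · simp only [Fintype.sum_sum_type, sysFlow, sum_const_zero, add_zero]
    simp_rw [← sum_mul, hcons]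

theorem sysStep_of_sysFlow_pos {a b : E ⊕ T} (h : 0 < sysFlow A0 A1 n u a b) :
    sysStep A0 A1 a b := by
  rcases a with j | i <;> rcases b with j' | i' <;>
    simp_all [sysFlow, sysStep, Nat.pos_iff_ne_zero]

end Organizer

theorem stmt_3_general {T E : Type*} [Fintype T] [Fintype E]
    (A0 A1 : T → E → ℕ)
    (n : E → ℕ) (u : T → ℕ)
    (hnfull : ∀ j : E, (∃ i, 0 < A0 i j ∨ 0 < A1 i j) ↔ 0 < n j)
    (hufull : ∀ i : T, (∃ j, 0 < A0 i j ∨ 0 < A1 i j) ↔ 0 < u i)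
    (hcons : ∀ i : T, ∑ j, A0 i j * n j = ∑ j, A1 i j * n j)
    (hcyc : ∀ j : E, ∑ i, A0 i j * u i = ∑ i, A1 i j * u i) :
    ∀ j : E, (∃ i, 0 < A0 i j ∨ 0 < A1 i j) →
      Relation.TransGen (sysStep A0 A1) (Sum.inl j) (Sum.inl j) := by
  rintro j ⟨i, hij⟩
  have hnj : 0 < n j := (hnfull j).1 ⟨i, hij⟩
  have hui : 0 < u i := (hufull i).1 ⟨j, hij⟩
  have hflow := isCirculation_sysFlow hcons hcyc
  have hstep : (fun a b => 0 < sysFlow A0 A1 n u a b) ≤ sysStep A0 A1 :=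
    fun _ _ => sysStep_of_sysFlow_pos
  refine Relation.TransGen.mono hstep _ _ ?_
  rcases hij with hA0 | hA1
  · exact hflow.transGen_self_of_pos_left (w := Sum.inr i) (by simp only [sysFlow]; positivity)
  · exact hflow.transGen_self_of_pos_right (w := Sum.inr i) (by simp only [sysFlow]; positivity)

/-- In an organizer, every internal entity lies on a directed cycle of the system graph, i.e. every internal entity is a catalyst. -/
theorem stmt_3 {T E : Type*} [Fintype T] [Fintype E]
    (S0 S1 A0 A1 : T → E → ℕ)
    (hA0 : ∀ i j, A0 i j ≤ S0 i j) (hA1 : ∀ i j, A1 i j ≤ S1 i j)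
    (hAne : ∃ i j, 0 < A0 i j ∨ 0 < A1 i j)
    (n : E → ℕ) (u : T → ℕ)
    (hnfull : ∀ j : E, (∃ i, 0 < A0 i j ∨ 0 < A1 i j) ↔ 0 < n j)
    (hufull : ∀ i : T, (∃ j, 0 < A0 i j ∨ 0 < A1 i j) ↔ 0 < u i)
    (hcons : ∀ i : T, ∑ j, A0 i j * n j = ∑ j, A1 i j * n j)
    (hcyc : ∀ j : E, ∑ i, A0 i j * u i = ∑ i, A1 i j * u i) :
    ∀ j : E, (∃ i, 0 < A0 i j ∨ 0 < A1 i j) →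
      Relation.TransGen (sysStep A0 A1) (Sum.inl j) (Sum.inl j) :=
  stmt_3_general A0 A1 n u hnfull hufull hcons hcyc
end

section
/- Call a directed cycle in the system graph irreducible if it cannot be written as the concatenation of two shorter directed cycles, equivalently it visits no vertex twice (a simple directed cycle). Every simple directed cycle C in the system graph of a system S gives rise to an organizer: setting n(j) = 1 for entities j on C and 0 otherwise, u(i) = 1 for transformations i on C and 0 otherwise, and A the subsystem with A₀[i,j] = 1 when edge j → i is in C, A₁[i,j] = 1 when edge i → j is in C, and 0 otherwise, yields a nonzero subsystem A ≤ S with A₀ n = A₁ n and A₀ᵀ u = A₁ᵀ u, with n and u full internal. -/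
/-!
Because `t` and `e` are injective, in `A` every transformation `t m` of the cycle has exactly
one incoming edge (from `e m`) and one outgoing edge (to `e (m + 1)`), and every entity `e m`
has exactly one outgoing edge (to `t m`) and one incoming edge (from `t (m - 1)`). As `A` is
supported on the cycle, multiplying by `n` or `u` does not change these row and column sums,
so both sides of each balance equation are the indicator of the cycle.
-/

open Finset

section CycleIncidence

variable {ι α β : Type*}

lemma pos_ite_one_zero_iff (p : Prop) [Decidable p] : 0 < (if p then 1 else 0 : ℕ) ↔ p := by
  split_ifs with h <;> simp [h]

lemma ite_mul_ite_of_imp {p q : Prop} [Decidable p] [Decidable q] (h : p → q) :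
    ((if p then 1 else 0) * (if q then 1 else 0) : ℕ) = if p then 1 else 0 := by
  simp only [ite_zero_mul_ite_zero, and_iff_left_of_imp h, mul_one]

lemma ite_exists_le {f : ι → α} {g : ι → β} {S : α → β → ℕ} (hS : ∀ m, 0 < S (f m) (g m))
    (a : α) (b : β) [Decidable (∃ m, f m = a ∧ g m = b)] :
    (if ∃ m, f m = a ∧ g m = b then 1 else 0) ≤ S a b := by
  split_ifs with h
  · obtain ⟨m, rfl, rfl⟩ := h
    exact hS m
  · exact Nat.zero_le _

lemma sum_ite_exists_eq_left [Fintype β] [DecidableEq β] {f : ι → α} (hf : Function.Injective f)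
    (g : ι → β) (a : α) [∀ b, Decidable (∃ m, f m = a ∧ g m = b)] [Decidable (∃ m, f m = a)] :
    ∑ b, (if ∃ m, f m = a ∧ g m = b then 1 else 0) = if ∃ m, f m = a then 1 else 0 := by
  split_ifs with ha
  · obtain ⟨m, rfl⟩ := ha
    simp only [hf.eq_iff, exists_eq_left, sum_ite_eq, mem_univ, if_true]
  · exact sum_eq_zero fun b _ => if_neg fun ⟨m, hm, _⟩ => ha ⟨m, hm⟩

lemma sum_ite_exists_eq_right [Fintype α] [DecidableEq α] (f : ι → α) {g : ι → β}
    (hg : Function.Injective g) (b : β) [∀ a, Decidable (∃ m, f m = a ∧ g m = b)]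
    [Decidable (∃ m, g m = b)] :
    ∑ a, (if ∃ m, f m = a ∧ g m = b then 1 else 0) = if ∃ m, g m = b then 1 else 0 := by
  split_ifs with hb
  · obtain ⟨m, rfl⟩ := hb
    simp only [hg.eq_iff, exists_eq_right, sum_ite_eq, mem_univ, if_true]
  · exact sum_eq_zero fun a _ => if_neg fun ⟨m, _, hm⟩ => hb ⟨m, hm⟩

end CycleIncidence

/-- Every simple (irreducible) directed cycle in the system graph of a
system `S = (S0, S1)` gives rise to an organizer: take `A` with unit entries on the
edges of the cycle, and `n`, `u` with value `1` exactly on the entities resp.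
transformations of the cycle. The cycle alternates entities `e m` and
transformations `t m`, with edges `e m → t m` (so `S0 (t m) (e m) > 0`) and
`t m → e (m+1)` (so `S1 (t m) (e (m+1)) > 0`), indices taken cyclically. -/
theorem stmt_6 {T E : Type*} [Fintype T] [Fintype E] [DecidableEq T] [DecidableEq E]
    (S0 S1 : T → E → ℕ) (k : ℕ)
    (e : Fin (k + 1) → E) (t : Fin (k + 1) → T)
    (he : Function.Injective e) (ht : Function.Injective t)
    (hin : ∀ m, 0 < S0 (t m) (e m))
    (hout : ∀ m, 0 < S1 (t m) (e (m + 1))) :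
    ∀ A0 A1 : T → E → ℕ, ∀ n : E → ℕ, ∀ u : T → ℕ,
    (A0 = fun i j => if ∃ m, t m = i ∧ e m = j then 1 else 0) →
    (A1 = fun i j => if ∃ m, t m = i ∧ e (m + 1) = j then 1 else 0) →
    (n = fun j => if ∃ m, e m = j then 1 else 0) →
    (u = fun i => if ∃ m, t m = i then 1 else 0) →
    -- A is a subsystem of S
    (∀ i j, A0 i j ≤ S0 i j) ∧ (∀ i j, A1 i j ≤ S1 i j) ∧
    -- A is nonzero
    (∃ i j, 0 < A0 i j ∨ 0 < A1 i j) ∧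
    -- n is a full internal entity vector
    (∀ j : E, (∃ i, 0 < A0 i j ∨ 0 < A1 i j) ↔ 0 < n j) ∧
    -- u is a full internal transformation vector
    (∀ i : T, (∃ j, 0 < A0 i j ∨ 0 < A1 i j) ↔ 0 < u i) ∧
    -- conservation equation A0 n = A1 n
    (∀ i : T, ∑ j, A0 i j * n j = ∑ j, A1 i j * n j) ∧
    -- cycle equation A0ᵀ u = A1ᵀ u
    (∀ j : E, ∑ i, A0 i j * u i = ∑ i, A1 i j * u i) := by
  rintro A0 A1 n u rfl rfl rfl rfl
  beta_reduce
  have hshift (j : E) : (∃ m, e (m + 1) = j) ↔ ∃ m, e m = j :=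
    ((Equiv.addRight (1 : Fin (k + 1))).surjective.exists (p := fun m => e m = j)).symm
  refine ⟨fun i j => ite_exists_le hin i j, fun i j => ite_exists_le hout i j,
    ⟨t 0, e 0, .inl ((pos_ite_one_zero_iff _).2 ⟨0, rfl, rfl⟩)⟩, fun j => ?_, fun i => ?_,
    fun i => ?_, fun j => ?_⟩
  · simp only [pos_ite_one_zero_iff]
    constructor
    · rintro ⟨_, ⟨m, -, rfl⟩ | ⟨m, -, rfl⟩⟩
      exacts [⟨m, rfl⟩, ⟨m + 1, rfl⟩]
    · rintro ⟨m, rfl⟩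
      exact ⟨t m, .inl ⟨m, rfl, rfl⟩⟩
  · simp only [pos_ite_one_zero_iff]
    constructor
    · rintro ⟨_, ⟨m, rfl, -⟩ | ⟨m, rfl, -⟩⟩ <;> exact ⟨m, rfl⟩
    · rintro ⟨m, rfl⟩
      exact ⟨e m, .inl ⟨m, rfl, rfl⟩⟩
  · rw [sum_congr rfl fun j _ => ite_mul_ite_of_imp fun ⟨m, _, hm⟩ => ⟨m, hm⟩,
      sum_congr rfl fun j _ => ite_mul_ite_of_imp fun ⟨m, _, hm⟩ => (hshift j).1 ⟨m, hm⟩,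
      sum_ite_exists_eq_left ht, sum_ite_exists_eq_left ht]
  · rw [sum_congr rfl fun i _ => ite_mul_ite_of_imp fun ⟨m, hm, _⟩ => ⟨m, hm⟩,
      sum_congr rfl fun i _ => ite_mul_ite_of_imp fun ⟨m, hm, _⟩ => ⟨m, hm⟩,
      sum_ite_exists_eq_right t he,
      sum_ite_exists_eq_right t (g := fun m => e (m + 1)) (he.comp (add_left_injective 1))]
    exact if_congr (hshift j).symm rfl rfl
end
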